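/- Suppose 2 ≤ |A| ≤ M−1, so that δ := log|A|/log M ∈ (0,1), and suppose γ > 0 is such that for every ε > 0 there exists C_ε > 0 with E(C_k) ≤ C_ε·N^{3δ−γ+ε} for all k ≥ 1 (N = M^k). Set β_E := (3/4)(1/2−δ) + γ/8. Then for every ε > 0 there exists C'_ε > 0 such that t_k ≤ C'_ε·N^{−4β_E+ε} for all k ≥ 1. -/

import Mathlib

/-!
With `S(ξ) = ∑_{x ∈ C} e(ξx/N)` one has `N · |F_N(1_C)(ξ)|² = |S(-ξ)|²`, so
`t_k = N⁻² ∑_d r(d) |S(d)|²`, where `r(d)` counts the pairs of `C × C` with difference `d`.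
By Cauchy–Schwarz this is at most `N⁻² (∑ r²)^{1/2} (∑ |S|⁴)^{1/2}`, and both sums are energies:
`∑ r² = E(C)` and, by orthogonality of characters, `∑ |S|⁴ = N · E(C)`. Hence
`t_k ≤ E(C_k) N^{-3/2} ≤ C_ε N^{3δ - γ + ε - 3/2}`, and `3δ - γ - 3/2 ≤ -4β_E` because `γ > 0`.
-/

open scoped BigOperators

/-- The Cantor iterates `C_k = {Σ_{j<k} a_j M^j : a_j ∈ A} ⊆ {0,…,M^k-1}`. -/
def Ck (M : ℕ) (A : Finset ℕ) (k : ℕ) : Finset ℕ :=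
  (Fintype.piFinset fun _ : Fin k => A).image fun a => ∑ j : Fin k, a j * M ^ (j : ℕ)

/-- The discrete Fourier transform of the indicator function of `S ⊆ Z_N`,
`F_N(1_S)(m) = N^{-1/2} Σ_{l<N} 1_S(l) exp(-2πi m l / N)`; it is `N`-periodic in `m`,
so a residue `m ∈ Z_N` may be fed in via any integer representative. -/
noncomputable def dftInd (N : ℕ) (S : Finset ℕ) (m : ℕ) : ℂ :=
  ((1 : ℝ) / Real.sqrt N : ℝ) * ∑ l ∈ Finset.range N,
    (if l ∈ S then (1 : ℂ) else 0) * Complex.exp (-(2 * (Real.pi : ℂ) * Complex.I * m * l) / N)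

/-- `t_k = (1/N) Σ_{j,ℓ ∈ Z_N} 1_{C_k}(j) 1_{C_k}(ℓ) |F_N(1_{C_k})(ℓ-j)|²`, `N = M^k`,
where `ℓ - j` is taken in `Z_N` (represented by `ℓ + N - j ≡ ℓ - j (mod N)`). -/
noncomputable def tk (M : ℕ) (A : Finset ℕ) (k : ℕ) : ℝ :=
  ((1 : ℝ) / ((M ^ k : ℕ) : ℝ)) * ∑ j ∈ Finset.range (M ^ k), ∑ l ∈ Finset.range (M ^ k),
    (if j ∈ Ck M A k then (1 : ℝ) else 0) * (if l ∈ Ck M A k then (1 : ℝ) else 0) *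
      ‖dftInd (M ^ k) (Ck M A k) (l + M ^ k - j)‖ ^ 2

/-- The additive energy of `X ⊆ Z_N`. -/
def addE (N : ℕ) (X : Finset ℕ) : ℕ :=
  (((X ×ˢ X) ×ˢ (X ×ˢ X)).filter fun p => (p.1.1 + p.1.2) % N = (p.2.1 + p.2.2) % N).card

open Finset ComplexConjugate
open scoped Combinatorics.Additive

section Differences

variable {G : Type*} [AddCommGroup G] [Fintype G] [DecidableEq G]

lemma addEnergy_eq_sum_sq_sub (s : Finset G) :
    E[s] = ∑ d, #{p ∈ s ×ˢ s | p.1 - p.2 = d} ^ 2 := by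
  have fibre_sq : ∑ d, #{p ∈ s ×ˢ s | p.1 - p.2 = d} ^ 2 =
      #{x ∈ (s ×ˢ s) ×ˢ (s ×ˢ s) | x.1.1 - x.1.2 = x.2.1 - x.2.2} := by
    rw [card_eq_sum_card_fiberwise (f := fun x => x.1.1 - x.1.2) (t := univ) (by simp)]
    refine sum_congr rfl fun d _ => ?_
    rw [sq, ← card_product]
    congr 1
    ext ⟨p, q⟩
    simp only [mem_filter, mem_product]
    grind
  rw [fibre_sq, addEnergy_eq_card_filter]
  refine card_nbij' (fun x => ((x.1.1, x.2.2), (x.2.1, x.1.2)))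
    (fun x => ((x.1.1, x.2.2), (x.2.1, x.1.2))) ?_ ?_ (fun _ _ => rfl) (fun _ _ => rfl)
  · rintro ⟨⟨a, b⟩, ⟨c, d⟩⟩
    simp only [coe_filter, mem_product, Set.mem_ofPred_eq]
    rintro ⟨⟨⟨ha, hb⟩, hc, hd⟩, h⟩
    exact ⟨⟨⟨ha, hd⟩, hc, hb⟩, sub_eq_sub_iff_add_eq_add.2 h⟩
  · rintro ⟨⟨a, b⟩, ⟨c, d⟩⟩
    simp only [coe_filter, mem_product, Set.mem_ofPred_eq]
    rintro ⟨⟨⟨ha, hb⟩, hc, hd⟩, h⟩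
    exact ⟨⟨⟨ha, hd⟩, hc, hb⟩, sub_eq_sub_iff_add_eq_add.1 h⟩

end Differences

section ExpSum

variable {R : Type*} [CommRing R] (ψ : AddChar R ℂ)

noncomputable def expSum (s : Finset R) (k : R) : ℂ := ∑ x ∈ s, ψ (k * x)

lemma expSum_sq (s : Finset R) (k : R) :
    expSum ψ s k ^ 2 = ∑ p ∈ s ×ˢ s, ψ (k * (p.1 + p.2)) := by
  simp only [expSum, sq, sum_mul_sum, sum_product, mul_add, AddChar.map_add_eq_mul]

variable [Fintype R]

lemma expSum_sq_mul_conj (s : Finset R) (k : R) :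
    expSum ψ s k ^ 2 * conj (expSum ψ s k ^ 2) =
      ∑ x ∈ (s ×ˢ s) ×ˢ (s ×ˢ s), ψ (k * (x.1.1 + x.1.2 - (x.2.1 + x.2.2))) := by
  rw [expSum_sq, map_sum, sum_mul_sum, ← sum_product']
  refine sum_congr rfl fun x _ => ?_
  rw [← AddChar.map_neg_eq_conj, ← AddChar.map_add_eq_mul, mul_sub, sub_eq_add_neg]

variable [DecidableEq R]

lemma sum_norm_expSum_pow_four (hψ : ψ.IsPrimitive) (s : Finset R) :
    ∑ k, ‖expSum ψ s k‖ ^ 4 = Fintype.card R * E[s] := by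
  have h (k : R) : (‖expSum ψ s k‖ : ℂ) ^ 4 = expSum ψ s k ^ 2 * conj (expSum ψ s k ^ 2) := by
    rw [Complex.mul_conj', norm_pow]; push_cast; ring
  apply Complex.ofReal_injective
  push_cast
  rw [sum_congr rfl fun k _ => (h k).trans (expSum_sq_mul_conj ψ s k), sum_comm]
  simp_rw [AddChar.sum_mulShift _ hψ, sub_eq_zero]
  rw [← Nat.cast_sum, sum_ite, sum_const_zero, add_zero, sum_const, smul_eq_mul,
    addEnergy_eq_card_filter, mul_comm, Nat.cast_mul]

lemma sum_sum_norm_expSum_sub_sq_le (hψ : ψ.IsPrimitive) (s : Finset R) :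
    ∑ j ∈ s, ∑ l ∈ s, ‖expSum ψ s (j - l)‖ ^ 2 ≤ E[s] * √(Fintype.card R) := by
  set r : R → ℝ := fun d => #{p ∈ s ×ˢ s | p.1 - p.2 = d}
  calc ∑ j ∈ s, ∑ l ∈ s, ‖expSum ψ s (j - l)‖ ^ 2
      = ∑ d, r d * ‖expSum ψ s d‖ ^ 2 := by
        simp only [r, ← nsmul_eq_mul, ← sum_const, sum_fiberwise']
        exact (sum_product' _ _ fun j l => ‖expSum ψ s (j - l)‖ ^ 2).symm
    _ ≤ √(∑ d, r d ^ 2) * √(∑ d, (‖expSum ψ s d‖ ^ 2) ^ 2) :=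
        Real.sum_mul_le_sqrt_mul_sqrt _ _ _
    _ = √(E[s] : ℝ) * √(Fintype.card R * E[s]) := by
        simp only [r, ← pow_mul, sum_norm_expSum_pow_four ψ hψ, addEnergy_eq_sum_sq_sub s]
        push_cast
        rfl
    _ = E[s] * √(Fintype.card R) := by
        rw [Real.sqrt_mul (by positivity), ← mul_assoc, mul_right_comm,
          Real.mul_self_sqrt (by positivity)]

end ExpSum

lemma sum_mul_pow_lt_pow {M : ℕ} : ∀ {k : ℕ} (a : Fin k → ℕ), (∀ j, a j < M) →
    ∑ j, a j * M ^ (j : ℕ) < M ^ k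
  | 0, _, _ => by simp
  | k + 1, a, ha => by
    have ih := sum_mul_pow_lt_pow (fun j => a j.succ) fun j => ha j.succ
    calc ∑ j, a j * M ^ (j : ℕ) = a 0 + M * ∑ j : Fin k, a j.succ * M ^ (j : ℕ) := by
          simp only [Fin.sum_univ_succ, Fin.val_zero, pow_zero, mul_one, Fin.val_succ, pow_succ',
            mul_sum, mul_left_comm]
      _ < M * (∑ j : Fin k, a j.succ * M ^ (j : ℕ) + 1) := by linarith [ha 0]
      _ ≤ M ^ (k + 1) := by rw [pow_succ']; exact Nat.mul_le_mul_left _ ih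

section ZModBridge

variable {N : ℕ} {S : Finset ℕ}

lemma natCast_zmod_injOn_range : Set.InjOn (Nat.cast : ℕ → ZMod N) (range N) :=
  fun a ha b hb h => by rwa [ZMod.natCast_eq_natCast_iff', Nat.mod_eq_of_lt (mem_range.1 ha),
    Nat.mod_eq_of_lt (mem_range.1 hb)] at h

variable [NeZero N]

lemma addE_eq_addEnergy_image (hS : S ⊆ range N) :
    addE N S = E[S.image (Nat.cast : ℕ → ZMod N)] := by
  have hval : ∀ x ∈ S, (x : ZMod N).val = x := fun x hx => ZMod.val_cast_of_lt (mem_range.1 (hS hx))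
  rw [addE, addEnergy_eq_card_filter]
  refine card_nbij'
    (fun x => (((x.1.1 : ZMod N), (x.1.2 : ZMod N)), ((x.2.1 : ZMod N), (x.2.2 : ZMod N))))
    (fun x => ((x.1.1.val, x.1.2.val), (x.2.1.val, x.2.2.val))) ?_ ?_ ?_ ?_
  · rintro ⟨⟨a, b⟩, ⟨c, d⟩⟩
    simp only [coe_filter, mem_product, Set.mem_ofPred_eq, mem_image]
    rintro ⟨⟨⟨ha, hb⟩, hc, hd⟩, h⟩
    refine ⟨⟨⟨⟨a, ha, rfl⟩, b, hb, rfl⟩, ⟨c, hc, rfl⟩, d, hd, rfl⟩, ?_⟩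
    rw [← Nat.cast_add, ← Nat.cast_add, ZMod.natCast_eq_natCast_iff']
    exact h
  · rintro ⟨⟨a, b⟩, ⟨c, d⟩⟩
    simp only [coe_filter, mem_product, Set.mem_ofPred_eq, mem_image]
    rintro ⟨⟨⟨⟨a, ha, rfl⟩, b, hb, rfl⟩, ⟨c, hc, rfl⟩, d, hd, rfl⟩, h⟩
    rw [hval a ha, hval b hb, hval c hc, hval d hd, ← ZMod.natCast_eq_natCast_iff']
    exact ⟨⟨⟨ha, hb⟩, hc, hd⟩, by push_cast; exact h⟩
  · rintro ⟨⟨a, b⟩, ⟨c, d⟩⟩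
    simp only [coe_filter, mem_product, Set.mem_ofPred_eq]
    rintro ⟨⟨⟨ha, hb⟩, hc, hd⟩, -⟩
    simp only [hval a ha, hval b hb, hval c hc, hval d hd]
  · rintro ⟨⟨a, b⟩, ⟨c, d⟩⟩ -
    simp only [ZMod.natCast_zmod_val]

lemma dftInd_eq_expSum (hS : S ⊆ range N) (n : ℕ) :
    dftInd N S n =
      ((√N)⁻¹ : ℝ) * expSum ZMod.stdAddChar (S.image (Nat.cast : ℕ → ZMod N)) (-n) := by
  rw [dftInd, expSum, sum_image (natCast_zmod_injOn_range.mono hS), one_div]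
  simp only [ite_mul, one_mul, zero_mul, sum_ite_mem, inter_eq_right.2 hS]
  congr 1
  refine sum_congr rfl fun l _ => ?_
  rw [show -(n : ZMod N) * l = ((-(n * l : ℤ) : ℤ) : ZMod N) by push_cast; ring,
    ZMod.stdAddChar_coe]
  congr 1
  push_cast
  ring

lemma sum_indicator_mul_norm_dftInd_sq (hS : S ⊆ range N) :
    ∑ j ∈ range N, ∑ l ∈ range N,
      (if j ∈ S then (1 : ℝ) else 0) * (if l ∈ S then (1 : ℝ) else 0) *
        ‖dftInd N S (l + N - j)‖ ^ 2 =
    (∑ j ∈ S.image (Nat.cast : ℕ → ZMod N), ∑ l ∈ S.image (Nat.cast : ℕ → ZMod N),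
      ‖expSum ZMod.stdAddChar (S.image (Nat.cast : ℕ → ZMod N)) (j - l)‖ ^ 2) / N := by
  have hN : (0 : ℝ) < N := by exact_mod_cast Nat.pos_of_neZero N
  simp_rw [mul_assoc, ← mul_sum, boole_mul, sum_ite_mem, inter_eq_right.2 hS,
    sum_image (natCast_zmod_injOn_range.mono hS), sum_div]
  refine sum_congr rfl fun j hj => sum_congr rfl fun l _ => ?_
  have hjN : j ≤ l + N := (mem_range.1 (hS hj)).le.trans (Nat.le_add_left N l)
  rw [dftInd_eq_expSum hS, norm_mul, mul_pow, Complex.norm_real, norm_inv, Real.norm_eq_abs,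
    abs_of_nonneg (Real.sqrt_nonneg _), inv_pow, Real.sq_sqrt hN.le, Nat.cast_sub hjN,
    Nat.cast_add, ZMod.natCast_self, add_zero, neg_sub, inv_mul_eq_div]

end ZModBridge

lemma Ck_subset_range {M : ℕ} {A : Finset ℕ} (hA : A ⊆ range M) (k : ℕ) :
    Ck M A k ⊆ range (M ^ k) := by
  intro x hx
  obtain ⟨a, ha, rfl⟩ := mem_image.1 hx
  exact mem_range.2 <| sum_mul_pow_lt_pow a fun j => mem_range.1 (hA (Fintype.mem_piFinset.1 ha j))

lemma tk_le_addE_mul_rpow {M : ℕ} (hM : 0 < M) {A : Finset ℕ} (hA : A ⊆ range M) (k : ℕ) :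
    tk M A k ≤ addE (M ^ k) (Ck M A k) * ((M ^ k : ℕ) : ℝ) ^ (-(3 / 2) : ℝ) := by
  have : NeZero (M ^ k) := ⟨pow_ne_zero k hM.ne'⟩
  set N := M ^ k
  have hN : (0 : ℝ) < N := by exact_mod_cast Nat.pos_of_neZero N
  have key := sum_sum_norm_expSum_sub_sq_le _ (ZMod.isPrimitive_stdAddChar N)
    ((Ck M A k).image (Nat.cast : ℕ → ZMod N))
  rw [ZMod.card] at key
  rw [tk, sum_indicator_mul_norm_dftInd_sq (Ck_subset_range hA k),
    addE_eq_addEnergy_image (Ck_subset_range hA k)]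
  have h32 : √N / (N * N) = (N : ℝ) ^ (-(3 / 2) : ℝ) := by
    rw [show (-(3 / 2) : ℝ) = 1 / 2 - 2 by norm_num, Real.rpow_sub hN, Real.rpow_two,
      ← Real.sqrt_eq_rpow, sq]
  rw [one_div_mul_eq_div, div_div, ← h32, ← mul_div_assoc]
  gcongr

theorem stmt8_general (M : ℕ) (hM : 2 ≤ M) (A : Finset ℕ) (hA : A ⊆ Finset.range M)
    (γ : ℝ) (hγ : 0 < γ)
    (hE : ∀ ε : ℝ, 0 < ε → ∃ Cε : ℝ, 0 < Cε ∧ ∀ k : ℕ, 1 ≤ k →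
      ((addE (M ^ k) (Ck M A k) : ℕ) : ℝ) ≤
        Cε * ((M ^ k : ℕ) : ℝ) ^ (3 * (Real.log A.card / Real.log M) - γ + ε)) :
    ∀ ε : ℝ, 0 < ε → ∃ Cε' : ℝ, 0 < Cε' ∧ ∀ k : ℕ, 1 ≤ k →
      tk M A k ≤ Cε' * ((M ^ k : ℕ) : ℝ) ^
        (-4 * ((3 / 4) * (1 / 2 - Real.log A.card / Real.log M) + γ / 8) + ε) := by
  intro ε hε
  obtain ⟨C, hC, hbound⟩ := hE ε hε
  refine ⟨C, hC, fun k hk => ?_⟩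
  set δ := Real.log A.card / Real.log M
  have hN : (1 : ℝ) ≤ (M ^ k : ℕ) := by exact_mod_cast Nat.one_le_pow _ _ (by omega)
  calc tk M A k ≤ addE (M ^ k) (Ck M A k) * ((M ^ k : ℕ) : ℝ) ^ (-(3 / 2) : ℝ) :=
        tk_le_addE_mul_rpow (by omega) hA k
    _ ≤ C * ((M ^ k : ℕ) : ℝ) ^ (3 * δ - γ + ε) * ((M ^ k : ℕ) : ℝ) ^ (-(3 / 2) : ℝ) := by
        gcongr
        exact hbound k hk
    _ = C * ((M ^ k : ℕ) : ℝ) ^ (3 * δ - γ + ε + -(3 / 2)) := by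
        rw [mul_assoc, ← Real.rpow_add (by positivity)]
    _ ≤ C * ((M ^ k : ℕ) : ℝ) ^ (-4 * ((3 / 4) * (1 / 2 - δ) + γ / 8) + ε) := by
        gcongr C * _ ^ ?_
        linarith

/-- If `2 ≤ |A| ≤ M-1` (so `δ = log|A|/log M ∈ (0,1)`) and `γ > 0` is such
that `E(C_k) ≤ C_ε N^{3δ-γ+ε}` for all `k ≥ 1` and every `ε > 0`, then with
`β_E = (3/4)(1/2-δ) + γ/8`, for every `ε > 0` there is `C'_ε > 0` with
`t_k ≤ C'_ε N^{-4β_E+ε}` for all `k ≥ 1`. -/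
theorem stmt8 (M : ℕ) (hM : 2 ≤ M) (A : Finset ℕ) (hA : A ⊆ Finset.range M)
    (hA2 : 2 ≤ A.card) (hAM : A.card ≤ M - 1) (γ : ℝ) (hγ : 0 < γ)
    (hE : ∀ ε : ℝ, 0 < ε → ∃ Cε : ℝ, 0 < Cε ∧ ∀ k : ℕ, 1 ≤ k →
      ((addE (M ^ k) (Ck M A k) : ℕ) : ℝ) ≤
        Cε * ((M ^ k : ℕ) : ℝ) ^ (3 * (Real.log A.card / Real.log M) - γ + ε)) :
    ∀ ε : ℝ, 0 < ε → ∃ Cε' : ℝ, 0 < Cε' ∧ ∀ k : ℕ, 1 ≤ k →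
      tk M A k ≤ Cε' * ((M ^ k : ℕ) : ℝ) ^
        (-4 * ((3 / 4) * (1 / 2 - Real.log A.card / Real.log M) + γ / 8) + ε) :=
  stmt8_general M hM A hA γ hγ hE
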